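/- Let (ω, ψ) solve the continuous mixed problem and (ω_T, ψ_T) solve its Galerkin discretization on subspaces H^{1,∞}_T ⊂ M(Ω) and H^1_{0,T} ⊂ H^1_0(Ω). Assuming the discrete stability estimate (Proposition on stability) holds, the error is bounded by the interpolation error: ‖ω - ω_T‖_M + ‖ψ - ψ_T‖_{1,Ω} ≤ C(‖ω - P_T ω‖_M + ‖ψ - Π_T ψ‖_{1,Ω}), where P_T ω ∈ H^{1,∞}_T and Π_T ψ ∈ H^1_{0,T} are arbitrary interpolants satisfying the consistency relations ⟨ΔΠ_T ψ, φ⟩ = -(∇Π_T ψ, ∇φ) and ⟨ΔP_T ω, ξ⟩ = -(∇P_T ω, ∇ξ) for discrete test functions. -/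
import Mathlib


open scoped RealInnerProductSpace

private lemma le_sqrt_sq_add (x y : ℝ) (hx : 0 ≤ x) : x ≤ Real.sqrt (x^2 + y^2) := by
  calc x = Real.sqrt (x^2) := (Real.sqrt_sq hx).symm
  _ ≤ _ := Real.sqrt_le_sqrt (by nlinarith [sq_nonneg y])

private lemma sqrt_mono2 {a b c d : ℝ} (ha : 0 ≤ a) (hc : 0 ≤ c) (hab : a ≤ b) (hcd : c ≤ d) :
    Real.sqrt (a^2 + c^2) ≤ Real.sqrt (b^2 + d^2) := by
  apply Real.sqrt_le_sqrt
  have h1 := pow_le_pow_left₀ ha hab 2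
  have h2 := pow_le_pow_left₀ hc hcd 2
  linarith

private lemma minkowski2 (a b c d : ℝ) :
    Real.sqrt ((a+b)^2 + (c+d)^2) ≤ Real.sqrt (a^2+c^2) + Real.sqrt (b^2+d^2) := by
  set s1 := Real.sqrt (a^2+c^2) with hs1def
  set s2 := Real.sqrt (b^2+d^2) with hs2def
  have hs1 : 0 ≤ s1 := Real.sqrt_nonneg _
  have hs2 : 0 ≤ s2 := Real.sqrt_nonneg _
  have h1 : s1^2 = a^2+c^2 := Real.sq_sqrt (by positivity)
  have h2 : s2^2 = b^2+d^2 := Real.sq_sqrt (by positivity)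
  have hcs : a*b + c*d ≤ s1*s2 := by
    nlinarith [sq_nonneg (a*d - b*c), mul_nonneg hs1 hs2, sq_nonneg (s1*s2 - a*b - c*d)]
  calc Real.sqrt ((a+b)^2 + (c+d)^2) ≤ Real.sqrt ((s1+s2)^2) :=
        Real.sqrt_le_sqrt (by nlinarith)
  _ = s1 + s2 := Real.sqrt_sq (by positivity)

set_option maxHeartbeats 1000000


/-- The interpolation error majorates the error: if `(ω, ψ)` solves
the continuous mixed problem `(ω, φ) + ⟨Δφ, ψ⟩ = 0` for all `φ ∈ M(Ω)`,
`⟨-Δω, ξ⟩ = (f, rot ξ)` for all `ξ ∈ H^1_0(Ω)`, and `(ω_T, ψ_T)` its Galerkin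
discretization on `H^{1,∞}_T × H^1_{0,T}`, then, assuming the discrete stability
estimate (constant `Cs`), one has
`‖ω - ω_T‖_M + ‖ψ - ψ_T‖_{1,Ω} ≤ C (‖ω - P_T ω‖_M + ‖ψ - Π_T ψ‖_{1,Ω})`
for arbitrary interpolants `P_T ω ∈ H^{1,∞}_T`, `Π_T ψ ∈ H^1_{0,T}`.
Abstract model as in the companion statements: `H1 = H^1(Ω)`, `H10 = H^1_0(Ω)` normed
by `‖∇·‖` (`hH10norm`), `iota` the inclusion, `j` the inclusion into `L²(Ω)`, `grad`
the gradient, Poincaré inequality `hPoincare`.  `M(Ω)` is modeled by the set `Mset` of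
pairs `(φ, Δφ) ∈ L² × H^{-1}`, which contains `(j v, ΔLift v)` for every `v ∈ H^1(Ω)`
(`hH1M`), where `ΔLift v χ = -(∇v, ∇χ)` (`hΔ`) — this builds in the consistency
relations for the discrete interpolants.  `H^{1,∞}_T = iota(HT0) ⊔ HTinf`.  The datum
`F ∈ H^{-1}` stands for `ξ ↦ (f, rot ξ)`.  The `M`-norm of a pair `(g, l)` is
`(‖g‖² + ‖l‖²)^{1/2}` and `‖v‖_{1,Ω} = (‖j (iota v)‖² + ‖∇v‖²)^{1/2}` on `H^1_0(Ω)`. -/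
theorem stmt17
    (H1 H10 L2 L2v : Type*)
    [NormedAddCommGroup H1] [NormedSpace ℝ H1]
    [NormedAddCommGroup H10] [NormedSpace ℝ H10]
    [NormedAddCommGroup L2] [InnerProductSpace ℝ L2]
    [NormedAddCommGroup L2v] [InnerProductSpace ℝ L2v]
    (iota : H10 →L[ℝ] H1) (j : H1 →L[ℝ] L2) (grad : H1 →L[ℝ] L2v)
    (hH10norm : ∀ χ : H10, ‖χ‖ = ‖grad (iota χ)‖)
    (Cp : ℝ) (hCp : 0 ≤ Cp)
    (hPoincare : ∀ χ : H10, ‖j (iota χ)‖ ≤ Cp * ‖grad (iota χ)‖)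
    (HT0 : Submodule ℝ H10)
    (HTinf : Submodule ℝ H1)
    (ΔLift : H1 → (H10 →L[ℝ] ℝ))
    (hΔ : ∀ (v : H1) (χ : H10), ΔLift v χ = - ⟪grad v, grad (iota χ)⟫)
    (Mset : Set (L2 × (H10 →L[ℝ] ℝ)))
    (hH1M : ∀ v : H1, ((j v, ΔLift v) : L2 × (H10 →L[ℝ] ℝ)) ∈ Mset)
    (Cs : ℝ) (hCs : 0 < Cs)
    -- the discrete stability estimate (Proposition on stability)
    (hstab : ∀ (g : L2) (m : H10) (l : H10 →L[ℝ] ℝ) (θT : H1) (ηT : H10),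
      θT ∈ HT0.map iota.toLinearMap ⊔ HTinf → ηT ∈ HT0 →
      (∀ φ ∈ HT0.map iota.toLinearMap ⊔ HTinf,
        ⟪j θT, j φ⟫ - ⟪grad (iota ηT), grad φ⟫ = ⟪g, j φ⟫ + ΔLift φ m) →
      (∀ ξ ∈ HT0, ⟪grad θT, grad (iota ξ)⟫ = l ξ) →
      Real.sqrt (‖j θT‖ ^ 2 + ‖ΔLift θT‖ ^ 2) + ‖grad (iota ηT)‖ ≤
        Cs * (‖g‖ + ‖grad (iota m)‖ + ‖l‖)) :
    ∃ C > 0,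
      ∀ (F : H10 →L[ℝ] ℝ) (ω : L2) (lω : H10 →L[ℝ] ℝ) (ψ : H10)
        (ωT : H1) (ψT : H10) (PTω : H1) (PTψ : H10),
      (ω, lω) ∈ Mset →
      -- continuous problem
      (∀ p ∈ Mset, ⟪ω, p.1⟫ + p.2 ψ = 0) →
      (∀ ξ : H10, - lω ξ = F ξ) →
      -- discrete (Galerkin) problem
      ωT ∈ HT0.map iota.toLinearMap ⊔ HTinf → ψT ∈ HT0 →
      (∀ φ ∈ HT0.map iota.toLinearMap ⊔ HTinf,
        ⟪j ωT, j φ⟫ - ⟪grad (iota ψT), grad φ⟫ = 0) →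
      (∀ ξ ∈ HT0, ⟪grad ωT, grad (iota ξ)⟫ = F ξ) →
      -- interpolants
      PTω ∈ HT0.map iota.toLinearMap ⊔ HTinf → PTψ ∈ HT0 →
      Real.sqrt (‖ω - j ωT‖ ^ 2 + ‖lω - ΔLift ωT‖ ^ 2) +
          Real.sqrt (‖j (iota (ψ - ψT))‖ ^ 2 + ‖grad (iota (ψ - ψT))‖ ^ 2) ≤
        C * (Real.sqrt (‖ω - j PTω‖ ^ 2 + ‖lω - ΔLift PTω‖ ^ 2) +
          Real.sqrt (‖j (iota (ψ - PTψ))‖ ^ 2 + ‖grad (iota (ψ - PTψ))‖ ^ 2)) := by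
  classical
  set S := HT0.map iota.toLinearMap ⊔ HTinf with hS
  set K := Real.sqrt (Cp^2 + 1) with hKdef
  have hK1 : 1 ≤ K := by
    calc (1:ℝ) = Real.sqrt 1 := Real.sqrt_one.symm
    _ ≤ K := Real.sqrt_le_sqrt (by nlinarith)
  refine ⟨1 + 2 * K * Cs, by nlinarith, ?_⟩
  intro F ω lω ψ ωT ψT PTω PTψ hMmem hcont hFω hωT hψT hdisc1 hdisc2 hPTω hPTψ
  set θT := PTω - ωT with hθdef
  set ηT := PTψ - ψT with hηdef
  have hθmem : θT ∈ S := Submodule.sub_mem _ hPTω hωT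
  have hηmem : ηT ∈ HT0 := Submodule.sub_mem _ hPTψ hψT
  -- ΔLift is additive on differences thanks to hΔ
  have hΔθ : ΔLift θT = ΔLift PTω - ΔLift ωT := by
    ext ξ
    simp only [ContinuousLinearMap.sub_apply, hΔ, hθdef, map_sub, inner_sub_left]
    ring
  -- continuous problem specialized to pairs (j φ, ΔLift φ)
  have hcont' : ∀ φ : H1, ⟪ω, j φ⟫ = ⟪grad φ, grad (iota ψ)⟫ := by
    intro φ
    have h := hcont _ (hH1M φ)
    rw [hΔ] at h
    linarith
  -- first auxiliary equation
  have eq1 : ∀ φ ∈ S, ⟪j θT, j φ⟫ - ⟪grad (iota ηT), grad φ⟫ =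
      ⟪j PTω - ω, j φ⟫ + ΔLift φ (PTψ - ψ) := by
    intro φ hφ
    have hd := hdisc1 φ hφ
    have hc := hcont' φ
    have hsym1 : ⟪grad (iota ψT), grad φ⟫ = ⟪grad φ, grad (iota ψT)⟫ := real_inner_comm _ _
    have hsym2 : ⟪grad (iota PTψ), grad φ⟫ = ⟪grad φ, grad (iota PTψ)⟫ := real_inner_comm _ _
    simp only [hθdef, hηdef, hΔ, map_sub, inner_sub_left, inner_sub_right] at hd hc ⊢
    linarith
  -- second auxiliary equation
  have eq2 : ∀ ξ ∈ HT0, ⟪grad θT, grad (iota ξ)⟫ = (lω - ΔLift PTω) ξ := by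
    intro ξ hξ
    have hd := hdisc2 ξ hξ
    have hF := hFω ξ
    simp only [hθdef, ContinuousLinearMap.sub_apply, hΔ, map_sub, inner_sub_left]
    linarith
  have hstab' := hstab (j PTω - ω) (PTψ - ψ) (lω - ΔLift PTω) θT ηT hθmem hηmem eq1 eq2
  set Rω := Real.sqrt (‖ω - j PTω‖^2 + ‖lω - ΔLift PTω‖^2) with hRω
  set Rψ := Real.sqrt (‖j (iota (ψ - PTψ))‖^2 + ‖grad (iota (ψ - PTψ))‖^2) with hRψ
  set Sθ := Real.sqrt (‖j θT‖^2 + ‖ΔLift θT‖^2) with hSθ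
  set G := ‖grad (iota ηT)‖ with hG
  have hRω0 : 0 ≤ Rω := Real.sqrt_nonneg _
  have hRψ0 : 0 ≤ Rψ := Real.sqrt_nonneg _
  have hSθ0 : 0 ≤ Sθ := Real.sqrt_nonneg _
  have hG0 : 0 ≤ G := norm_nonneg _
  -- bound the stability data by Rω, Rψ
  have hg : ‖j PTω - ω‖ ≤ Rω := by
    rw [norm_sub_rev]; exact le_sqrt_sq_add _ _ (norm_nonneg _)
  have hl : ‖lω - ΔLift PTω‖ ≤ Rω := by
    rw [hRω, add_comm]; exact le_sqrt_sq_add _ _ (norm_nonneg _)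
  have hm : ‖grad (iota (PTψ - ψ))‖ ≤ Rψ := by
    have he : grad (iota (PTψ - ψ)) = -(grad (iota (ψ - PTψ))) := by
      rw [map_sub, map_sub, map_sub, map_sub]; abel
    rw [he, norm_neg, hRψ, add_comm]
    exact le_sqrt_sq_add _ _ (norm_nonneg _)
  have hK0 : (0:ℝ) ≤ K := le_trans zero_le_one hK1
  have hstab2 : Sθ + G ≤ Cs * (2 * Rω + Rψ) := by
    refine le_trans hstab' (mul_le_mul_of_nonneg_left ?_ hCs.le)
    linarith
  -- ω part
  have hω1 : ‖ω - j ωT‖ ≤ ‖ω - j PTω‖ + ‖j θT‖ := by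
    have : ω - j ωT = (ω - j PTω) + j θT := by
      rw [hθdef, map_sub]; abel
    rw [this]; exact norm_add_le _ _
  have hω2 : ‖lω - ΔLift ωT‖ ≤ ‖lω - ΔLift PTω‖ + ‖ΔLift θT‖ := by
    have : lω - ΔLift ωT = (lω - ΔLift PTω) + ΔLift θT := by rw [hΔθ]; abel
    rw [this]; exact norm_add_le _ _
  have hωpart : Real.sqrt (‖ω - j ωT‖^2 + ‖lω - ΔLift ωT‖^2) ≤ Rω + Sθ :=
    le_trans (sqrt_mono2 (norm_nonneg _) (norm_nonneg _) hω1 hω2) (minkowski2 _ _ _ _)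
  -- ψ part
  have hψeq : (ψ : H10) - ψT = (ψ - PTψ) + ηT := by rw [hηdef]; abel
  have hψ1 : ‖j (iota (ψ - ψT))‖ ≤ ‖j (iota (ψ - PTψ))‖ + Cp * G := by
    calc ‖j (iota (ψ - ψT))‖ = ‖j (iota (ψ - PTψ)) + j (iota ηT)‖ := by
          rw [hψeq, map_add, map_add]
    _ ≤ ‖j (iota (ψ - PTψ))‖ + ‖j (iota ηT)‖ := norm_add_le _ _
    _ ≤ _ := by have := hPoincare ηT; rw [← hG] at this; linarith
  have hψ2 : ‖grad (iota (ψ - ψT))‖ ≤ ‖grad (iota (ψ - PTψ))‖ + G := by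
    calc ‖grad (iota (ψ - ψT))‖ = ‖grad (iota (ψ - PTψ)) + grad (iota ηT)‖ := by
          rw [hψeq, map_add, map_add]
    _ ≤ _ := norm_add_le _ _
  have hKG : Real.sqrt ((Cp * G)^2 + G^2) = K * G := by
    have h1 : (Cp * G)^2 + G^2 = (Cp^2 + 1) * G^2 := by ring
    rw [h1, Real.sqrt_mul (by positivity), Real.sqrt_sq hG0, hKdef]
  have hψpart : Real.sqrt (‖j (iota (ψ - ψT))‖^2 + ‖grad (iota (ψ - ψT))‖^2) ≤
      Rψ + K * G := by
    calc Real.sqrt (‖j (iota (ψ - ψT))‖^2 + ‖grad (iota (ψ - ψT))‖^2)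
        ≤ Real.sqrt ((‖j (iota (ψ - PTψ))‖ + Cp * G)^2 + (‖grad (iota (ψ - PTψ))‖ + G)^2) :=
          sqrt_mono2 (norm_nonneg _) (norm_nonneg _) hψ1 hψ2
    _ ≤ Rψ + Real.sqrt ((Cp * G)^2 + G^2) := minkowski2 _ _ _ _
    _ = Rψ + K * G := by rw [hKG]
  -- combine
  have hSKG : Sθ + K * G ≤ K * Cs * (2 * Rω + Rψ) := by
    have h1 : Sθ + K * G ≤ K * (Sθ + G) := by nlinarith
    have h2 : K * (Sθ + G) ≤ K * (Cs * (2 * Rω + Rψ)) :=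
      mul_le_mul_of_nonneg_left hstab2 hK0
    calc Sθ + K * G ≤ K * (Sθ + G) := h1
    _ ≤ K * (Cs * (2 * Rω + Rψ)) := h2
    _ = K * Cs * (2 * Rω + Rψ) := by ring
  calc Real.sqrt (‖ω - j ωT‖^2 + ‖lω - ΔLift ωT‖^2) +
      Real.sqrt (‖j (iota (ψ - ψT))‖^2 + ‖grad (iota (ψ - ψT))‖^2)
      ≤ (Rω + Sθ) + (Rψ + K * G) := add_le_add hωpart hψpart
  _ ≤ (1 + 2 * K * Cs) * (Rω + Rψ) := by
    have h3 : (0:ℝ) ≤ K * Cs * Rψ := by positivity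
    nlinarith [hSKG]
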